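/- arXiv:1004.0751 — 11 statements merged into one kernel-verified Lean document; each statement's English description precedes it below -/
import Mathlib

section
/- Zero-curvature (Lax) representation of the first positive isospectral four-potential Ablowitz–Ladik flow: let K¹(n) = ((1 − Q(n)R(n))·S(n), −(1 − Q(n)R(n))·T(n−1), (1 − S(n)T(n))·Q(n+1), −(1 − S(n)T(n))·R(n)) and V¹(n) = [[(1/2)z² − Q(n)T(n−1), z·Q(n)], [z·T(n−1), −(1/2)z²]]. Then for every n ∈ ℤ, U′[K¹](n) = V¹(n+1)·U(n) − U(n)·V¹(n). -/
open Matrix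

/-- The four-potential Ablowitz–Ladik spectral matrix. -/
def ALU {F : Type*} [CommRing F] (z : Fˣ) (Q R S T : ℤ → F) (n : ℤ) :
    Matrix (Fin 2) (Fin 2) F :=
  !![(z : F) ^ 2 + S n * R n, (z : F) * Q n + (↑z⁻¹ : F) * S n;
     (z : F) * T n + (↑z⁻¹ : F) * R n, (↑z⁻¹ : F) ^ 2 + T n * Q n]

/-- The Gateaux derivative of the Ablowitz–Ladik spectral matrix `U` in the direction of
the vector field `X = (X₁, X₂, X₃, X₄)`: the linearization of the entries of `U(n)` in
`(Q(n), R(n), S(n), T(n))`. -/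
def ALUder {F : Type*} [CommRing F] (z : Fˣ) (Q R S T X₁ X₂ X₃ X₄ : ℤ → F) (n : ℤ) :
    Matrix (Fin 2) (Fin 2) F :=
  !![S n * X₂ n + R n * X₃ n, (z : F) * X₁ n + (↑z⁻¹ : F) * X₃ n;
     (z : F) * X₄ n + (↑z⁻¹ : F) * X₂ n, T n * X₁ n + Q n * X₄ n]

/-- Zero-curvature (Lax) representation of the first positive isospectral four-potential
Ablowitz–Ladik flow: `U′[K¹](n) = V¹(n+1)·U(n) − U(n)·V¹(n)`. -/
theorem AL_zcr_isospectral_first {F : Type*} [CommRing F] [Invertible (2 : F)]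
    (z : Fˣ) (Q R S T : ℤ → F) :
    ∀ n : ℤ,
      ALUder z Q R S T
          (fun k => (1 - Q k * R k) * S k)
          (fun k => -((1 - Q k * R k) * T (k - 1)))
          (fun k => (1 - S k * T k) * Q (k + 1))
          (fun k => -((1 - S k * T k) * R k)) n
        = (fun k : ℤ => !![⅟(2 : F) * (z : F) ^ 2 - Q k * T (k - 1), (z : F) * Q k;
              (z : F) * T (k - 1), -(⅟(2 : F) * (z : F) ^ 2)]) (n + 1)
            * ALU z Q R S T n
          - ALU z Q R S T n
            * (fun k : ℤ => !![⅟(2 : F) * (z : F) ^ 2 - Q k * T (k - 1), (z : F) * Q k;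
                (z : F) * T (k - 1), -(⅟(2 : F) * (z : F) ^ 2)]) n := by
  intro n
  have hz : (z : F) * ↑z⁻¹ = 1 := z.mul_inv
  have h2 : (2 : F) * ⅟2 = 1 := mul_invOf_self 2
  beta_reduce
  rw [ALU, ALUder, add_sub_cancel_right, mul_fin_two, mul_fin_two]
  ext i j
  fin_cases i <;> fin_cases j <;> simp only [Matrix.sub_apply, Fin.zero_eta, Fin.mk_one, of_apply, cons_val',
    cons_val_zero, cons_val_one, empty_val', cons_val_fin_one]
  · linear_combination (S n * T (n - 1) - R n * Q (n + 1)) * hz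
  · linear_combination (-(↑z⁻¹ : F) * Q (n + 1) - (z : F) * S n) * hz
      + (-(z : F) * z * ↑z⁻¹ * S n - (z : F) * z * z * Q n) * h2
  · linear_combination ((↑z⁻¹ : F) * T (n - 1) + (z : F) * R n) * hz
      + ((z : F) * z * ↑z⁻¹ * R n + (z : F) * z * z * T n) * h2
  · linear_combination (Q n * R n - S n * T n) * hz
end

section
/- Zero-curvature (Lax) representation of the first negative isospectral four-potential Ablowitz–Ladik flow: let K⁻¹(n) = ((1 − Q(n)R(n))·S(n−1), −(1 − Q(n)R(n))·T(n), (1 − S(n)T(n))·Q(n), −(1 − S(n)T(n))·R(n+1)) and V⁻¹(n) = [[(1/2)z⁻², −z⁻¹·S(n−1)], [−z⁻¹·R(n), −(1/2)z⁻² + R(n)S(n−1)]]. Then for every n ∈ ℤ, U′[K⁻¹](n) = V⁻¹(n+1)·U(n) − U(n)·V⁻¹(n). -/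
/-
The spectral parameter enters `V⁻¹(n)` through the scalar part `½ z⁻² σ₃` alone, with
`σ₃ = diag(1, -1)`. Commuting `σ₃` past any `2 × 2` matrix doubles its off-diagonal entries,
so this part contributes `z⁻²` times the signed off-diagonal of `U(n)` and the `½` disappears.
What is left is a polynomial identity in `z`, `z⁻¹` and the potentials, which holds modulo
`z z⁻¹ = 1`.
-/

open Matrix

theorem Matrix.fin_two_diag_neg_commutator {F : Type*} [CommRing F] (c : F)
    (A : Matrix (Fin 2) (Fin 2) F) :
    !![c, 0; 0, -c] * A - A * !![c, 0; 0, -c] = !![0, 2 * c * A 0 1; -(2 * c * A 1 0), 0] := by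
  rw [eta_fin_two A]
  simp only [mul_fin_two, of_sub_of, cons_sub_cons, empty_sub_empty, EmbeddingLike.apply_eq_iff_eq,
    of_apply, cons_val_zero, cons_val_one, vecCons_inj, and_true]
  refine ⟨⟨?_, ?_⟩, ?_, ?_⟩ <;> ring

section NegFirstFlow

variable {F : Type*} [CommRing F] (z : Fˣ) (Q R S T : ℤ → F)

/-- The temporal matrix `V⁻¹` of the first negative isospectral flow. -/
def ALVnegFirst [Invertible (2 : F)] (n : ℤ) : Matrix (Fin 2) (Fin 2) F :=
  !![⅟(2 : F) * (↑z⁻¹ : F) ^ 2, -((↑z⁻¹ : F) * S (n - 1));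
    -((↑z⁻¹ : F) * R n), -(⅟(2 : F) * (↑z⁻¹ : F) ^ 2) + R n * S (n - 1)]

def ALWnegFirst (n : ℤ) : Matrix (Fin 2) (Fin 2) F :=
  !![0, -((↑z⁻¹ : F) * S (n - 1)); -((↑z⁻¹ : F) * R n), R n * S (n - 1)]

theorem ALVnegFirst_eq_add [Invertible (2 : F)] (n : ℤ) :
    ALVnegFirst z R S n =
      !![⅟(2 : F) * (↑z⁻¹ : F) ^ 2, 0; 0, -(⅟(2 : F) * (↑z⁻¹ : F) ^ 2)] + ALWnegFirst z R S n := by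
  simp only [ALVnegFirst, ALWnegFirst, of_add_of, cons_add_cons, empty_add_empty, add_zero,
    zero_add, neg_add_eq_sub]

theorem ALUder_negFirst_eq (n : ℤ) :
    ALUder z Q R S T
        (fun k => (1 - Q k * R k) * S (k - 1))
        (fun k => -((1 - Q k * R k) * T k))
        (fun k => (1 - S k * T k) * Q k)
        (fun k => -((1 - S k * T k) * R (k + 1))) n
      = !![0, (↑z⁻¹ : F) ^ 2 * ALU z Q R S T n 0 1; -((↑z⁻¹ : F) ^ 2 * ALU z Q R S T n 1 0), 0]
        + (ALWnegFirst z R S (n + 1) * ALU z Q R S T n - ALU z Q R S T n * ALWnegFirst z R S n) := by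
  have hz : (z : F) * ↑z⁻¹ = 1 := Units.mul_inv z
  simp only [ALUder, ALU, ALWnegFirst, add_sub_cancel_right, mul_fin_two, of_sub_of, of_add_of,
    cons_sub_cons, cons_add_cons, empty_sub_empty, empty_add_empty, EmbeddingLike.apply_eq_iff_eq,
    of_apply, cons_val_zero, cons_val_one, vecCons_inj, and_true]
  refine ⟨⟨?_, ?_⟩, ?_, ?_⟩
  · linear_combination (S n * T n - Q n * R n) * hz
  · linear_combination (-(z : F) * S (n - 1) - Q n * ↑z⁻¹) * hz
  · linear_combination ((z : F) * R (n + 1) + T n * ↑z⁻¹) * hz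
  · linear_combination (Q n * R (n + 1) - T n * S (n - 1)) * hz

end NegFirstFlow

/-- Zero-curvature (Lax) representation of the first negative isospectral four-potential
Ablowitz–Ladik flow: `U′[K⁻¹](n) = V⁻¹(n+1)·U(n) − U(n)·V⁻¹(n)`. -/
theorem AL_zcr_isospectral_neg_first {F : Type*} [CommRing F] [Invertible (2 : F)]
    (z : Fˣ) (Q R S T : ℤ → F) :
    ∀ n : ℤ,
      ALUder z Q R S T
          (fun k => (1 - Q k * R k) * S (k - 1))
          (fun k => -((1 - Q k * R k) * T k))
          (fun k => (1 - S k * T k) * Q k)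
          (fun k => -((1 - S k * T k) * R (k + 1))) n
        = (fun k : ℤ => !![⅟(2 : F) * (↑z⁻¹ : F) ^ 2, -((↑z⁻¹ : F) * S (k - 1));
              -((↑z⁻¹ : F) * R k), -(⅟(2 : F) * (↑z⁻¹ : F) ^ 2) + R k * S (k - 1)]) (n + 1)
            * ALU z Q R S T n
          - ALU z Q R S T n
            * (fun k : ℤ => !![⅟(2 : F) * (↑z⁻¹ : F) ^ 2, -((↑z⁻¹ : F) * S (k - 1));
                -((↑z⁻¹ : F) * R k), -(⅟(2 : F) * (↑z⁻¹ : F) ^ 2) + R k * S (k - 1)]) n := by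
  intro n
  change _ = ALVnegFirst z R S (n + 1) * ALU z Q R S T n - ALU z Q R S T n * ALVnegFirst z R S n
  rw [ALVnegFirst_eq_add, ALVnegFirst_eq_add, add_mul, mul_add, add_sub_add_comm,
    fin_two_diag_neg_commutator, mul_invOf_cancel_left]
  exact ALUder_negFirst_eq z Q R S T n
end

section
/- Zero-curvature representation of the zeroth non-isospectral four-potential Ablowitz–Ladik flow: let σ⁰(n) = ((2n + 1/2)·Q(n), −(2n + 1/2)·R(n), (2n + 3/2)·S(n), −(2n + 3/2)·T(n)) (with the integer n cast into F), let W⁰(n) = [[n, 0], [0, −n]], and let U_z(n) = [[2z, Q(n) − z⁻²·S(n)], [T(n) − z⁻²·R(n), −2z⁻³]] be the formal z-derivative of U(n). Then for every n ∈ ℤ, U′[σ⁰](n) = W⁰(n+1)·U(n) − U(n)·W⁰(n) − (1/2)·z·U_z(n). -/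
/-!
Since `W⁰(n) = diag(n, -n)` is diagonal, `W⁰(n+1)·U(n) - U(n)·W⁰(n)` multiplies the entry `(i, j)`
of `U(n)` by `w_i(n+1) - w_j(n)`, that is by `1`, `2n+1`, `-(2n+1)` and `-1`. After subtracting
`(1/2)·z·U_z(n)` each entry becomes a polynomial identity modulo `z·z⁻¹ = 1` and `⅟2·2 = 1`.
-/

open Matrix

theorem diagonal_mul_sub_mul_diagonal {m R : Type*} [Fintype m] [DecidableEq m] [CommRing R]
    (d d' : m → R) (M : Matrix m m R) :
    diagonal d' * M - M * diagonal d = of fun i j => (d' i - d j) * M i j := by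
  ext i j
  simp only [Matrix.sub_apply, diagonal_mul, mul_diagonal, of_apply]
  ring

/-- Zero-curvature representation of the zeroth non-isospectral four-potential
Ablowitz–Ladik flow `σ⁰`, with `W⁰(n) = diag(n, −n)` and `U_z` the formal `z`-derivative
of `U`: `U′[σ⁰](n) = W⁰(n+1)·U(n) − U(n)·W⁰(n) − (1/2)·z·U_z(n)`. -/
theorem AL_zcr_nonisospectral_zeroth {F : Type*} [CommRing F] [Invertible (2 : F)]
    (z : Fˣ) (Q R S T : ℤ → F) :
    ∀ n : ℤ,
      ALUder z Q R S T
          (fun k => (2 * (k : F) + ⅟(2 : F)) * Q k)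
          (fun k => -((2 * (k : F) + ⅟(2 : F)) * R k))
          (fun k => (2 * (k : F) + 3 * ⅟(2 : F)) * S k)
          (fun k => -((2 * (k : F) + 3 * ⅟(2 : F)) * T k)) n
        = (fun k : ℤ => !![(k : F), 0; 0, -(k : F)]) (n + 1) * ALU z Q R S T n
          - ALU z Q R S T n * (fun k : ℤ => !![(k : F), 0; 0, -(k : F)]) n
          - (⅟(2 : F) * (z : F)) •
              !![2 * (z : F), Q n - (↑z⁻¹ : F) ^ 2 * S n;
                 T n - (↑z⁻¹ : F) ^ 2 * R n, -(2 * (↑z⁻¹ : F) ^ 3)] := by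
  intro n
  have hz : (z : F) * ↑z⁻¹ = 1 := z.mul_inv
  have h2 : ⅟(2 : F) * 2 = 1 := invOf_mul_self 2
  have hW (k : ℤ) : !![(k : F), 0; 0, -(k : F)] = diagonal ![(k : F), -k] :=
    (diagonal_fin_two ![(k : F), -k]).symm
  simp only [hW, diagonal_mul_sub_mul_diagonal]
  ext i j
  fin_cases i <;> fin_cases j <;>
    simp only [ALUder, ALU, Fin.zero_eta, Fin.mk_one, Fin.isValue, of_apply, cons_val', cons_val_zero,
      cons_val_one, cons_val_fin_one, Matrix.sub_apply, Matrix.smul_apply, smul_eq_mul, Int.cast_add,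
      Int.cast_one]
  · linear_combination (S n * R n + (z : F) ^ 2) * h2
  · linear_combination ((z : F) * Q n + ↑z⁻¹ * S n) * h2 - ⅟(2 : F) * ↑z⁻¹ * S n * hz
  · linear_combination -(((z : F) * T n + ↑z⁻¹ * R n) * h2) - ⅟(2 : F) * ↑z⁻¹ * R n * hz
  · linear_combination -((T n * Q n + (↑z⁻¹ : F) ^ 2) * h2) - ((↑z⁻¹ : F) ^ 2 * ⅟(2 : F) * 2) * hz
end

section
/- Auxiliary split Lax representation of the first positive isospectral four-potential Ablowitz–Ladik flow: let K¹(n) = ((1 − Q(n)R(n))·S(n), −(1 − Q(n)R(n))·T(n−1), (1 − S(n)T(n))·Q(n+1), −(1 − S(n)T(n))·R(n)), V¹(n) = [[(1/2)z² − Q(n)T(n−1), z·Q(n)], [z·T(n−1), −(1/2)z²]] and V̂¹(n) = [[(1/2)z² − R(n)S(n), z·S(n)], [z·R(n), −(1/2)z²]]. Then for every n ∈ ℤ the two auxiliary zero-curvature equations hold: [[0, K¹₁(n)], [K¹₂(n), 0]] = V̂¹(n)·U¹(n) − U¹(n)·V¹(n) and [[0, K¹₃(n)], [K¹₄(n), 0]]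 = V¹(n+1)·U²(n) − U²(n)·V̂¹(n), where the left-hand sides are the derivatives of U¹(n) and U²(n) under Q_t = K¹₁, R_t = K¹₂, S_t = K¹₃, T_t = K¹₄. -/
/-! Both equations are instances of one `2 × 2` identity: writing
`V(a, b) = [[z²/2 − ab, za], [zb, −z²/2]]`, we have `V¹(n) = V(Q n, T (n-1))` and
`V̂¹(n) = V(S n, R n)`, and
`V(a, b)·[[z, c], [b, z⁻¹]] − [[z, c], [b, z⁻¹]]·V(c, d) = [[0, (1 − cb)a], [−(1 − cb)d, 0]]`,
an entrywise computation using `z·z⁻¹ = 1` and `2·⅟2 = 1`. -/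

open Matrix

/-- The first factor `U¹(n) = [[z, Q(n)], [R(n), z⁻¹]]` of the four-potential
Ablowitz–Ladik spectral matrix. -/
def ALU1 {F : Type*} [CommRing F] (z : Fˣ) (Q R : ℤ → F) (n : ℤ) :
    Matrix (Fin 2) (Fin 2) F :=
  !![(z : F), Q n; R n, (↑z⁻¹ : F)]

section LaxPair

variable {F : Type*} [CommRing F] [Invertible (2 : F)]

def laxV (z : Fˣ) (a b : F) : Matrix (Fin 2) (Fin 2) F :=
  !![⅟(2 : F) * (z : F) ^ 2 - a * b, (z : F) * a; (z : F) * b, -(⅟(2 : F) * (z : F) ^ 2)]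

theorem laxV_mul_sub_mul_laxV (z : Fˣ) (a b c d : F) :
    laxV z a b * !![(z : F), c; b, (↑z⁻¹ : F)] - !![(z : F), c; b, (↑z⁻¹ : F)] * laxV z c d
      = !![0, (1 - c * b) * a; -((1 - c * b) * d), 0] := by
  have hz : (z : F) * (↑z⁻¹ : F) = 1 := z.mul_inv
  have h2 : ⅟(2 : F) * 2 = 1 := invOf_mul_self 2
  rw [laxV, laxV, mul_fin_two, mul_fin_two]
  ext i j
  fin_cases i <;> fin_cases j <;> simp
  · ring
  · linear_combination (z : F) ^ 2 * c * h2 + a * hz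
  · linear_combination -((z : F) ^ 2 * b * h2)
  · ring

end LaxPair

/-- Auxiliary split Lax representation of the first positive isospectral four-potential
Ablowitz–Ladik flow: the two auxiliary zero-curvature equations
`U¹_t = V̂¹·U¹ − U¹·V¹` and `U²_t = V¹(n+1)·U² − U²·V̂¹`, where the left-hand sides are
the derivatives of `U¹(n)` and `U²(n)` under `Q_t = K¹₁`, `R_t = K¹₂`, `S_t = K¹₃`,
`T_t = K¹₄`. -/
theorem AL_split_lax_first {F : Type*} [CommRing F] [Invertible (2 : F)]
    (z : Fˣ) (Q R S T : ℤ → F) (n : ℤ) :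
    (!![0, (1 - Q n * R n) * S n; -((1 - Q n * R n) * T (n - 1)), 0]
        = (fun k : ℤ => !![⅟(2 : F) * (z : F) ^ 2 - R k * S k, (z : F) * S k;
              (z : F) * R k, -(⅟(2 : F) * (z : F) ^ 2)]) n * ALU1 z Q R n
          - ALU1 z Q R n
            * (fun k : ℤ => !![⅟(2 : F) * (z : F) ^ 2 - Q k * T (k - 1), (z : F) * Q k;
                (z : F) * T (k - 1), -(⅟(2 : F) * (z : F) ^ 2)]) n)
    ∧ (!![0, (1 - S n * T n) * Q (n + 1); -((1 - S n * T n) * R n), 0]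
        = (fun k : ℤ => !![⅟(2 : F) * (z : F) ^ 2 - Q k * T (k - 1), (z : F) * Q k;
              (z : F) * T (k - 1), -(⅟(2 : F) * (z : F) ^ 2)]) (n + 1) * ALU1 z S T n
          - ALU1 z S T n
            * (fun k : ℤ => !![⅟(2 : F) * (z : F) ^ 2 - R k * S k, (z : F) * S k;
                (z : F) * R k, -(⅟(2 : F) * (z : F) ^ 2)]) n) := by
  simp only [ALU1, mul_comm (R n) (S n), add_sub_cancel_right]
  exact ⟨(laxV_mul_sub_mul_laxV z (S n) (R n) (Q n) (T (n - 1))).symm,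
    (laxV_mul_sub_mul_laxV z (Q (n + 1)) (T n) (S n) (R n)).symm⟩
end

section
/- The first positive and first negative isospectral Ablowitz–Ladik flows commute: ⟦K¹, K⁻¹⟧(u)(n) = 0 for every u and every n ∈ ℤ; that is, (K¹)′(u)[K⁻¹(u)](n) = (K⁻¹)′(u)[K¹(u)](n), where both Gateaux derivatives exist. -/
/-- A quadruple of real sequences `u = (Q, R, S, T)`. -/
abbrev ALQuad : Type := (ℤ → ℝ) × (ℤ → ℝ) × (ℤ → ℝ) × (ℤ → ℝ)

/-- Evaluation of a quadruple of sequences at `n`, as a vector in `ℝ⁴`. -/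
def evalQ (u : ALQuad) (n : ℤ) : ℝ × ℝ × ℝ × ℝ :=
  (u.1 n, u.2.1 n, u.2.2.1 n, u.2.2.2 n)

/-- The zeroth isospectral four-potential Ablowitz–Ladik flow `K⁰`. -/
def K0 (u : ALQuad) : ALQuad :=
  (fun n => u.1 n, fun n => -u.2.1 n, fun n => u.2.2.1 n, fun n => -u.2.2.2 n)

/-- The first positive isospectral four-potential Ablowitz–Ladik flow `K¹`. -/
def K1 (u : ALQuad) : ALQuad :=
  (fun n => (1 - u.1 n * u.2.1 n) * u.2.2.1 n,
   fun n => -((1 - u.1 n * u.2.1 n) * u.2.2.2 (n - 1)),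
   fun n => (1 - u.2.2.1 n * u.2.2.2 n) * u.1 (n + 1),
   fun n => -((1 - u.2.2.1 n * u.2.2.2 n) * u.2.1 n))

/-- The first negative isospectral four-potential Ablowitz–Ladik flow `K⁻¹`. -/
def Kneg1 (u : ALQuad) : ALQuad :=
  (fun n => (1 - u.1 n * u.2.1 n) * u.2.2.1 (n - 1),
   fun n => -((1 - u.1 n * u.2.1 n) * u.2.2.2 n),
   fun n => (1 - u.2.2.1 n * u.2.2.2 n) * u.1 n,
   fun n => -((1 - u.2.2.1 n * u.2.2.2 n) * u.2.1 (n + 1)))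

/-- The zeroth non-isospectral four-potential Ablowitz–Ladik flow `σ⁰`. -/
noncomputable def sigma0 (u : ALQuad) : ALQuad :=
  (fun n => (2 * (n : ℝ) + 1 / 2) * u.1 n,
   fun n => -((2 * (n : ℝ) + 1 / 2) * u.2.1 n),
   fun n => (2 * (n : ℝ) + 3 / 2) * u.2.2.1 n,
   fun n => -((2 * (n : ℝ) + 3 / 2) * u.2.2.2 n))

/-! The Gateaux derivative of each flow is computed coordinatewise by the product rule, since every
coordinate of `K¹` and `K⁻¹` has the form `±(1 - x y) z` with `x, y, z` values of `u` near `n`.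
The commutation `⟦K¹, K⁻¹⟧ = 0` is then a polynomial identity in the values of `Q, R, S, T` at
`n - 1`, `n`, `n + 1`. -/

lemma hasDerivAt_one_sub_mul_mul (a b c a' b' c' : ℝ) :
    HasDerivAt (fun ε : ℝ => (1 - (a + ε * a') * (b + ε * b')) * (c + ε * c'))
      ((1 - a * b) * c' - (a' * b + a * b') * c) 0 := by
  have hline : ∀ x x' : ℝ, HasDerivAt (fun ε : ℝ => x + ε * x') x' 0 := fun x x' =>
    (hasDerivAt_mul_const x').const_add x
  refine ((((hline a a').mul (hline b b')).const_sub 1).mul (hline c c')).congr_deriv ?_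
  simp only [Pi.mul_apply, zero_mul, add_zero]
  ring

def K1Deriv (u v : ALQuad) : ALQuad :=
  (fun n => (1 - u.1 n * u.2.1 n) * v.2.2.1 n - (v.1 n * u.2.1 n + u.1 n * v.2.1 n) * u.2.2.1 n,
   fun n => -((1 - u.1 n * u.2.1 n) * v.2.2.2 (n - 1)
      - (v.1 n * u.2.1 n + u.1 n * v.2.1 n) * u.2.2.2 (n - 1)),
   fun n => (1 - u.2.2.1 n * u.2.2.2 n) * v.1 (n + 1)
      - (v.2.2.1 n * u.2.2.2 n + u.2.2.1 n * v.2.2.2 n) * u.1 (n + 1),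
   fun n => -((1 - u.2.2.1 n * u.2.2.2 n) * v.2.1 n
      - (v.2.2.1 n * u.2.2.2 n + u.2.2.1 n * v.2.2.2 n) * u.2.1 n))

def Kneg1Deriv (u v : ALQuad) : ALQuad :=
  (fun n => (1 - u.1 n * u.2.1 n) * v.2.2.1 (n - 1)
      - (v.1 n * u.2.1 n + u.1 n * v.2.1 n) * u.2.2.1 (n - 1),
   fun n => -((1 - u.1 n * u.2.1 n) * v.2.2.2 n
      - (v.1 n * u.2.1 n + u.1 n * v.2.1 n) * u.2.2.2 n),
   fun n => (1 - u.2.2.1 n * u.2.2.2 n) * v.1 n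
      - (v.2.2.1 n * u.2.2.2 n + u.2.2.1 n * v.2.2.2 n) * u.1 n,
   fun n => -((1 - u.2.2.1 n * u.2.2.2 n) * v.2.1 (n + 1)
      - (v.2.2.1 n * u.2.2.2 n + u.2.2.1 n * v.2.2.2 n) * u.2.1 (n + 1)))

lemma hasDerivAt_evalQ_K1 (u v : ALQuad) (n : ℤ) :
    HasDerivAt (fun ε : ℝ => evalQ (K1 (u + ε • v)) n) (evalQ (K1Deriv u v) n) 0 :=
  (hasDerivAt_one_sub_mul_mul _ _ _ _ _ _).prodMk
    ((hasDerivAt_one_sub_mul_mul _ _ _ _ _ _).neg.prodMk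
      ((hasDerivAt_one_sub_mul_mul _ _ _ _ _ _).prodMk
        (hasDerivAt_one_sub_mul_mul _ _ _ _ _ _).neg))

lemma hasDerivAt_evalQ_Kneg1 (u v : ALQuad) (n : ℤ) :
    HasDerivAt (fun ε : ℝ => evalQ (Kneg1 (u + ε • v)) n) (evalQ (Kneg1Deriv u v) n) 0 :=
  (hasDerivAt_one_sub_mul_mul _ _ _ _ _ _).prodMk
    ((hasDerivAt_one_sub_mul_mul _ _ _ _ _ _).neg.prodMk
      ((hasDerivAt_one_sub_mul_mul _ _ _ _ _ _).prodMk
        (hasDerivAt_one_sub_mul_mul _ _ _ _ _ _).neg))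

lemma K1Deriv_Kneg1_eq_Kneg1Deriv_K1 (u : ALQuad) :
    K1Deriv u (Kneg1 u) = Kneg1Deriv u (K1 u) := by
  ext n <;> simp only [K1Deriv, Kneg1Deriv, K1, Kneg1, sub_add_cancel, add_sub_cancel_right] <;> ring

/-- The first positive and first negative isospectral Ablowitz–Ladik flows commute:
both Gateaux derivatives `(K¹)′(u)[K⁻¹(u)](n)` and `(K⁻¹)′(u)[K¹(u)](n)` exist and are
equal, i.e. `⟦K¹, K⁻¹⟧(u)(n) = 0`. -/
theorem AL_flows_K1_Kneg1_commute (u : ALQuad) (n : ℤ) :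
    ∃ d : ℝ × ℝ × ℝ × ℝ,
      HasDerivAt (fun ε : ℝ => evalQ (K1 (u + ε • Kneg1 u)) n) d 0 ∧
      HasDerivAt (fun ε : ℝ => evalQ (Kneg1 (u + ε • K1 u)) n) d 0 :=
  ⟨_, hasDerivAt_evalQ_K1 u (Kneg1 u) n,
    K1Deriv_Kneg1_eq_Kneg1Deriv_K1 u ▸ hasDerivAt_evalQ_Kneg1 u (K1 u) n⟩
end

section
/- Generation of the flow algebra (equation (51)): every element K(m) and σ(m), m ∈ ℤ, belongs to the Lie subalgebra of g generated by the four elements σ(1), σ(2), σ(−2), K(1). -/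
/-
Since `⁅σ m, σ s⁆ = (m - s) • σ (m + s)`, in characteristic zero `σ (m + s)` is generated by
`σ m` and `σ s` whenever `m ≠ s`. From `σ 1`, `σ 2`, `σ (-2)` this gives `σ (-1)` and `σ 0`, then
every `σ n` with `n ≥ 2` by adding `σ 1` and every `σ n` with `n ≤ -2` by adding `σ (-1)`.
Finally `K m = ⁅K 1, σ (m - 1)⁆`.
-/

namespace LieSubalgebra

variable {R L : Type*} [Field R] [CharZero R] [LieRing L] [LieAlgebra R L] (S : LieSubalgebra R L)

theorem mem_of_zsmul_mem {k : ℤ} (hk : k ≠ 0) {x : L} (h : k • x ∈ S) : x ∈ S := by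
  rw [← Int.cast_smul_eq_zsmul R] at h
  exact (S.toSubmodule.smul_mem_iff (Int.cast_ne_zero.mpr hk)).mp h

variable {S} (σ : ℤ → L)

theorem witt_add_mem (hσσ : ∀ m s : ℤ, ⁅σ m, σ s⁆ = (m - s) • σ (m + s)) {m s : ℤ}
    (hm : σ m ∈ S) (hs : σ s ∈ S) (hne : m ≠ s) : σ (m + s) ∈ S :=
  S.mem_of_zsmul_mem (sub_ne_zero.mpr hne) (hσσ m s ▸ S.lie_mem hm hs)

theorem witt_mem_of_generators (hσσ : ∀ m s : ℤ, ⁅σ m, σ s⁆ = (m - s) • σ (m + s))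
    (h1 : σ 1 ∈ S) (h2 : σ 2 ∈ S) (hm2 : σ (-2) ∈ S) (m : ℤ) :
    σ m ∈ S := by
  have hm1 : σ (-1) ∈ S := by simpa using witt_add_mem σ hσσ hm2 h1 (by norm_num)
  have h0 : σ 0 ∈ S := by simpa using witt_add_mem σ hσσ h2 hm2 (by norm_num)
  have hpos : ∀ n, 2 ≤ n → σ n ∈ S :=
    Int.leInduction h2 fun n hn ih => witt_add_mem σ hσσ ih h1 (by omega)
  have hneg : ∀ n, n ≤ -2 → σ n ∈ S :=
    Int.leInductionDown hm2 fun n hn ih => by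
      simpa [← sub_eq_add_neg] using witt_add_mem σ hσσ ih hm1 (by omega)
  rcases le_or_gt m (-2) with hm | hm
  · exact hneg m hm
  rcases le_or_gt 2 m with hm' | hm'
  · exact hpos m hm'
  obtain rfl | rfl | rfl : m = -1 ∨ m = 0 ∨ m = 1 := by omega
  exacts [hm1, h0, h1]

end LieSubalgebra

theorem AL_flow_algebra_generators_general {g : Type*} [LieRing g] [LieAlgebra ℝ g]
    (K σ : ℤ → g)
    (hKσ : ∀ m s : ℤ, ⁅K m, σ s⁆ = m • K (m + s))
    (hσσ : ∀ m s : ℤ, ⁅σ m, σ s⁆ = (m - s) • σ (m + s)) :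
    ∀ m : ℤ,
      K m ∈ LieSubalgebra.lieSpan ℝ g {σ 1, σ 2, σ (-2), K 1} ∧
      σ m ∈ LieSubalgebra.lieSpan ℝ g {σ 1, σ 2, σ (-2), K 1} := by
  set S := LieSubalgebra.lieSpan ℝ g {σ 1, σ 2, σ (-2), K 1}
  have hσ : ∀ m, σ m ∈ S :=
    LieSubalgebra.witt_mem_of_generators σ hσσ (LieSubalgebra.subset_lieSpan (by simp))
      (LieSubalgebra.subset_lieSpan (by simp)) (LieSubalgebra.subset_lieSpan (by simp))
  have hK1 : K 1 ∈ S := LieSubalgebra.subset_lieSpan (by simp)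
  intro m
  refine ⟨?_, hσ m⟩
  have hKm := S.lie_mem hK1 (hσ (m - 1))
  rw [hKσ] at hKm
  simpa using hKm

/-- Generation of the flow algebra (equation (51)): every `K(m)` and `σ(m)` lies in the
Lie subalgebra generated by `σ(1)`, `σ(2)`, `σ(−2)` and `K(1)`. -/
theorem AL_flow_algebra_generators {g : Type*} [LieRing g] [LieAlgebra ℝ g]
    (K σ : ℤ → g)
    (hKK : ∀ m s : ℤ, ⁅K m, K s⁆ = 0)
    (hKσ : ∀ m s : ℤ, ⁅K m, σ s⁆ = m • K (m + s))
    (hσσ : ∀ m s : ℤ, ⁅σ m, σ s⁆ = (m - s) • σ (m + s)) :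
    ∀ m : ℤ,
      K m ∈ LieSubalgebra.lieSpan ℝ g {σ 1, σ 2, σ (-2), K 1} ∧
      σ m ∈ LieSubalgebra.lieSpan ℝ g {σ 1, σ 2, σ (-2), K 1} :=
  AL_flow_algebra_generators_general K σ hKσ hσσ
end

section
/- Generation of the symmetry algebra of the isospectral hierarchy (equation (52)): fix m ∈ ℤ and t ∈ ℝ, and set τ(s) := (m·t) • K(m+s) + σ(s) for s ∈ ℤ. Then every element K(l), l ∈ ℤ, and every element τ(s), s ∈ ℤ, belongs to the Lie subalgebra of g generated by the four elements τ(1), τ(2), τ(−2), K(1). -/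
/-!
With `c = m t`, since `c (m + a) - c (m + b) = c (a - b)` the `K`-parts cancel in `⁅τ a, τ b⁆`,
so `τ` satisfies the Witt relations `⁅τ a, τ b⁆ = (a - b) • τ (a + b)`. Bracketing `τ 1`, `τ 2`,
`τ (-2)` yields `τ (-1)` and `τ 0`, and then every `τ (n + 1)` from `⁅τ n, τ 1⁆` and every
`τ (-n - 1)` from `⁅τ (-n), τ (-1)⁆`, the coefficient `a - b` being invertible as long as
`a ≠ b`. Finally `K l = ⁅K 1, τ (l - 1)⁆`.
-/

theorem LieSubalgebra.zsmul_mem_iff {R L : Type*} [Field R] [CharZero R] [LieRing L]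
    [LieAlgebra R L] (S : LieSubalgebra R L) {n : ℤ} (hn : n ≠ 0) {x : L} :
    n • x ∈ S ↔ x ∈ S := by
  rw [← Int.cast_smul_eq_zsmul R]
  exact Submodule.smul_mem_iff S.toSubmodule (Int.cast_ne_zero.mpr hn)

section WittRelations

variable {R L : Type*} [CommRing R] [LieRing L] [LieAlgebra R L] {K σ : ℤ → L}

theorem lie_smul_shift_add_smul_shift_add (hKK : ∀ m s : ℤ, ⁅K m, K s⁆ = 0)
    (hKσ : ∀ m s : ℤ, ⁅K m, σ s⁆ = m • K (m + s))
    (hσσ : ∀ m s : ℤ, ⁅σ m, σ s⁆ = (m - s) • σ (m + s)) (c : R) (m a b : ℤ) :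
    ⁅c • K (m + a) + σ a, c • K (m + b) + σ b⁆ =
      (a - b) • (c • K (m + (a + b)) + σ (a + b)) := by
  rw [add_lie, lie_add, lie_add, lie_smul, lie_smul, smul_lie, smul_lie, hKK, ← lie_skew (σ a),
    hKσ, hKσ, hσσ, add_right_comm m b a, add_assoc m a b]
  module

theorem lie_smul_shift_add_right (hKK : ∀ m s : ℤ, ⁅K m, K s⁆ = 0)
    (hKσ : ∀ m s : ℤ, ⁅K m, σ s⁆ = m • K (m + s)) (c : R) (m l s : ℤ) :
    ⁅K l, c • K (m + s) + σ s⁆ = l • K (l + s) := by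
  rw [lie_add, lie_smul, hKK, smul_zero, zero_add, hKσ]

end WittRelations

theorem witt_mem_of_mem_one_two_neg_two {R L : Type*} [Field R] [CharZero R] [LieRing L]
    [LieAlgebra R L] {τ : ℤ → L} (hτ : ∀ a b : ℤ, ⁅τ a, τ b⁆ = (a - b) • τ (a + b))
    {S : LieSubalgebra R L} (h₁ : τ 1 ∈ S) (h₂ : τ 2 ∈ S) (hneg₂ : τ (-2) ∈ S) (s : ℤ) :
    τ s ∈ S := by
  have add_mem {a b : ℤ} (hab : a ≠ b) (ha : τ a ∈ S) (hb : τ b ∈ S) : τ (a + b) ∈ S := by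
    rw [← S.zsmul_mem_iff (sub_ne_zero.mpr hab), ← hτ]
    exact S.lie_mem ha hb
  have hneg₁ : τ (-1) ∈ S := by simpa using add_mem (by norm_num) h₁ hneg₂
  induction s using Int.induction_on with
  | zero => simpa using add_mem (by norm_num) h₂ hneg₂
  | succ n ih =>
    by_cases hn : (n : ℤ) = 1
    · rwa [hn]
    · exact add_mem hn ih h₁
  | pred n ih =>
    by_cases hn : (n : ℤ) = 1
    · rw [hn]; simpa using hneg₂
    · simpa [sub_eq_add_neg] using add_mem (by omega) ih hneg₁

/-- Generation of the symmetry algebra of the isospectral hierarchy (equation (52)):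
with `τ(s) = (m·t) • K(m+s) + σ(s)`, every `K(l)` and every `τ(s)` lies in the Lie
subalgebra generated by `τ(1)`, `τ(2)`, `τ(−2)` and `K(1)`. -/
theorem AL_isospectral_symmetry_generators {g : Type*} [LieRing g] [LieAlgebra ℝ g]
    (K σ : ℤ → g)
    (hKK : ∀ m s : ℤ, ⁅K m, K s⁆ = 0)
    (hKσ : ∀ m s : ℤ, ⁅K m, σ s⁆ = m • K (m + s))
    (hσσ : ∀ m s : ℤ, ⁅σ m, σ s⁆ = (m - s) • σ (m + s))
    (m : ℤ) (t : ℝ) (τ : ℤ → g)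
    (hτ : ∀ s : ℤ, τ s = ((m : ℝ) * t) • K (m + s) + σ s) :
    ∀ l s : ℤ,
      K l ∈ LieSubalgebra.lieSpan ℝ g {τ 1, τ 2, τ (-2), K 1} ∧
      τ s ∈ LieSubalgebra.lieSpan ℝ g {τ 1, τ 2, τ (-2), K 1} := by
  set S := LieSubalgebra.lieSpan ℝ g {τ 1, τ 2, τ (-2), K 1}
  have hττ (a b : ℤ) : ⁅τ a, τ b⁆ = (a - b) • τ (a + b) := by
    simp only [hτ]
    exact lie_smul_shift_add_smul_shift_add hKK hKσ hσσ _ m a b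
  have hτS (s : ℤ) : τ s ∈ S :=
    witt_mem_of_mem_one_two_neg_two hττ (LieSubalgebra.subset_lieSpan (by simp))
      (LieSubalgebra.subset_lieSpan (by simp)) (LieSubalgebra.subset_lieSpan (by simp)) s
  refine fun l s => ⟨?_, hτS s⟩
  have hK : ⁅K 1, τ (l - 1)⁆ = K l := by
    rw [hτ, lie_smul_shift_add_right hKK hKσ]
    simp
  rw [← hK]
  exact S.lie_mem (LieSubalgebra.subset_lieSpan (by simp)) (hτS (l - 1))
end

section
/- Symmetry condition for the η-symmetries of the non-isospectral Ablowitz–Ladik hierarchy (Theorem 4.2): for every m ∈ ℤ, every s ∈ ℕ and every t ∈ ℝ, Σ_{j=0}^{s−1} C(s,j)·(s−j)·m·(m·t)^{s−j−1} • σ(m − j·m) = ⁅σ(m), Σ_{j=0}^{s} C(s,j)·(m·t)^{s−j} • σ(m − j·m)⁆, where C(s,j) is the binomial coefficient. In other words, the explicit t-derivative of η_{m,s}(t) := Σ_{j=0}^{s} C(s,j)·(m·t)^{s−j} • σ(m − j·m) equals its bracket with the flow σ(m), so each η_{m,s} is a symmetry of the m-th non-isospectral equation. -/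
open Finset

/-! Bracketing with `σ m` shifts `σ (m - (j + 1) * m)` to `σ (m - j * m)` with the factor
`(j + 1) * m`, and kills the `j = 0` term since `⁅σ m, σ m⁆ = 0`. After reindexing, the identity
`C(s, j + 1) * (j + 1) = C(s, j) * (s - j)` turns the coefficients of `⁅σ m, η_{m,s}⁆` into those
of the `t`-derivative of `η_{m,s}`. -/

section WittRelation

variable {R g : Type*} [CommRing R] [LieRing g] [LieAlgebra R g] {σ : ℤ → g}

theorem lie_apply_sub_succ_mul (hσσ : ∀ m s : ℤ, ⁅σ m, σ s⁆ = (m - s) • σ (m + s))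
    (m : ℤ) (j : ℕ) :
    ⁅σ m, σ (m - ((j + 1 : ℕ) : ℤ) * m)⁆ = (((j + 1 : ℕ) : ℤ) * m) • σ (m - j * m) := by
  rw [hσσ]
  congr 1
  · push_cast
    ring
  · congr 1
    push_cast
    ring

theorem lie_sum_smul_apply_sub_mul (hσσ : ∀ m s : ℤ, ⁅σ m, σ s⁆ = (m - s) • σ (m + s))
    (m : ℤ) (s : ℕ) (c : ℕ → R) :
    ⁅σ m, ∑ j ∈ range (s + 1), c j • σ (m - j * m)⁆
      = ∑ j ∈ range s, (c (j + 1) * ((j + 1 : ℕ) * m : ℤ)) • σ (m - j * m) := by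
  rw [lie_sum, sum_range_succ']
  simp only [lie_smul, lie_apply_sub_succ_mul hσσ, Nat.cast_zero, zero_mul, sub_zero, lie_self,
    smul_zero, add_zero]
  refine sum_congr rfl fun j _ => ?_
  rw [← Int.cast_smul_eq_zsmul R, smul_smul]

end WittRelation

theorem AL_eta_symmetry_condition_general {g : Type*} [LieRing g] [LieAlgebra ℝ g]
    (σ : ℤ → g)
    (hσσ : ∀ m s : ℤ, ⁅σ m, σ s⁆ = (m - s) • σ (m + s)) :
    ∀ (m : ℤ) (s : ℕ) (t : ℝ),
      ∑ j ∈ Finset.range s,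
          ((s.choose j : ℝ) * ((s - j : ℕ) : ℝ) * (m : ℝ) * ((m : ℝ) * t) ^ (s - j - 1))
            • σ (m - (j : ℤ) * m)
        = ⁅σ m, ∑ j ∈ Finset.range (s + 1),
            ((s.choose j : ℝ) * ((m : ℝ) * t) ^ (s - j)) • σ (m - (j : ℤ) * m)⁆ := by
  intro m s t
  rw [lie_sum_smul_apply_sub_mul hσσ]
  refine sum_congr rfl fun j _ => ?_
  have hchoose : (s.choose (j + 1) : ℝ) * (j + 1 : ℕ) = s.choose j * (s - j : ℕ) := by
    exact_mod_cast Nat.choose_succ_right_eq s j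
  rw [Nat.sub_sub]
  congr 1
  push_cast at hchoose ⊢
  linear_combination ((m : ℝ) * ((m : ℝ) * t) ^ (s - (j + 1))) * hchoose.symm

/-- Symmetry condition for the η-symmetries of the non-isospectral Ablowitz–Ladik
hierarchy (Theorem 4.2): the explicit `t`-derivative of
`η_{m,s}(t) = Σ_{j=0}^{s} C(s,j)·(m·t)^{s−j} • σ(m − j·m)` equals its bracket with the
flow `σ(m)`. -/
theorem AL_eta_symmetry_condition {g : Type*} [LieRing g] [LieAlgebra ℝ g]
    (K σ : ℤ → g)
    (hKK : ∀ m s : ℤ, ⁅K m, K s⁆ = 0)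
    (hKσ : ∀ m s : ℤ, ⁅K m, σ s⁆ = m • K (m + s))
    (hσσ : ∀ m s : ℤ, ⁅σ m, σ s⁆ = (m - s) • σ (m + s)) :
    ∀ (m : ℤ) (s : ℕ) (t : ℝ),
      ∑ j ∈ Finset.range s,
          ((s.choose j : ℝ) * ((s - j : ℕ) : ℝ) * (m : ℝ) * ((m : ℝ) * t) ^ (s - j - 1))
            • σ (m - (j : ℤ) * m)
        = ⁅σ m, ∑ j ∈ Finset.range (s + 1),
            ((s.choose j : ℝ) * ((m : ℝ) * t) ^ (s - j)) • σ (m - (j : ℤ) * m)⁆ :=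
  AL_eta_symmetry_condition_general σ hσσ
end

section
/- Symmetry condition for the γ-symmetries of the non-isospectral Ablowitz–Ladik hierarchy (Theorem 4.2): for every m ∈ ℤ, every s ∈ ℕ and every t ∈ ℝ, Σ_{j=0}^{s−1} C(s,j)·(s−j)·m·(m·t)^{s−j−1} • K(−j·m) = ⁅σ(m), Σ_{j=0}^{s} C(s,j)·(m·t)^{s−j} • K(−j·m)⁆, where C(s,j) is the binomial coefficient. In other words, the explicit t-derivative of γ_{m,s}(t) := Σ_{j=0}^{s} C(s,j)·(m·t)^{s−j} • K(−j·m) equals its bracket with the flow σ(m), so each γ_{m,s} is a symmetry of the m-th non-isospectral equation. -/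
/-!
Since `⁅σ m, K n⁆ = -n • K (n + m)`, bracketing with `σ m` lowers the index `-(j + 1) m` of
each term of `γ_{m,s}` to `-j m` (and kills the `j = 0` term) at the cost of a factor
`(j + 1) m`. After the index shift, the identity
`C(s, j + 1) (j + 1) = C(s, j) (s - j)` turns the result into the term-wise `t`-derivative.
-/

open Finset

theorem lie_eq_neg_smul_of_lie_eq_smul {L : Type*} [LieRing L] (K σ : ℤ → L)
    (hKσ : ∀ m s : ℤ, ⁅K m, σ s⁆ = m • K (m + s)) (m n : ℤ) :
    ⁅σ m, K n⁆ = (-n) • K (n + m) := by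
  rw [← lie_skew, hKσ, neg_smul]

theorem Nat.cast_choose_succ_mul_pow {R : Type*} [CommRing R] (s j : ℕ) (a x : R) :
    (s.choose (j + 1) : R) * x ^ (s - (j + 1)) * ((j + 1) * a)
      = (s.choose j : R) * ((s - j : ℕ) : R) * a * x ^ (s - j - 1) := by
  have hchoose : (s.choose (j + 1) : R) * (j + 1) = s.choose j * ((s - j : ℕ) : R) := by
    simpa only [Nat.cast_mul, Nat.cast_succ] using
      congrArg (Nat.cast : ℕ → R) (Nat.choose_succ_right_eq s j)
  rw [Nat.sub_succ' s j]
  linear_combination a * x ^ (s - j - 1) * hchoose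

theorem AL_gamma_symmetry_condition_general {g : Type*} [LieRing g] [LieAlgebra ℝ g]
    (K σ : ℤ → g)
    (hKσ : ∀ m s : ℤ, ⁅K m, σ s⁆ = m • K (m + s)) :
    ∀ (m : ℤ) (s : ℕ) (t : ℝ),
      ∑ j ∈ Finset.range s,
          ((s.choose j : ℝ) * ((s - j : ℕ) : ℝ) * (m : ℝ) * ((m : ℝ) * t) ^ (s - j - 1))
            • K (-(j : ℤ) * m)
        = ⁅σ m, ∑ j ∈ Finset.range (s + 1),
            ((s.choose j : ℝ) * ((m : ℝ) * t) ^ (s - j)) • K (-(j : ℤ) * m)⁆ := by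
  intro m s t
  have hbracket := lie_eq_neg_smul_of_lie_eq_smul K σ hKσ m
  rw [lie_sum, sum_range_succ']
  have hzero :
      ⁅σ m, ((s.choose 0 : ℝ) * ((m : ℝ) * t) ^ (s - 0)) • K (-((0 : ℕ) : ℤ) * m)⁆ = 0 := by
    simp [lie_smul, hbracket]
  rw [hzero, add_zero]
  refine sum_congr rfl fun j _ => ?_
  have hindex : -((j + 1 : ℕ) : ℤ) * m + m = -(j : ℤ) * m := by push_cast; ring
  rw [lie_smul, hbracket, hindex, ← Int.cast_smul_eq_zsmul ℝ, smul_smul,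
    ← Nat.cast_choose_succ_mul_pow]
  congr 1
  push_cast
  ring

/-- Symmetry condition for the γ-symmetries of the non-isospectral Ablowitz–Ladik
hierarchy (Theorem 4.2): the explicit `t`-derivative of
`γ_{m,s}(t) = Σ_{j=0}^{s} C(s,j)·(m·t)^{s−j} • K(−j·m)` equals its bracket with the
flow `σ(m)`. -/
theorem AL_gamma_symmetry_condition {g : Type*} [LieRing g] [LieAlgebra ℝ g]
    (K σ : ℤ → g)
    (hKK : ∀ m s : ℤ, ⁅K m, K s⁆ = 0)
    (hKσ : ∀ m s : ℤ, ⁅K m, σ s⁆ = m • K (m + s))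
    (hσσ : ∀ m s : ℤ, ⁅σ m, σ s⁆ = (m - s) • σ (m + s)) :
    ∀ (m : ℤ) (s : ℕ) (t : ℝ),
      ∑ j ∈ Finset.range s,
          ((s.choose j : ℝ) * ((s - j : ℕ) : ℝ) * (m : ℝ) * ((m : ℝ) * t) ^ (s - j - 1))
            • K (-(j : ℤ) * m)
        = ⁅σ m, ∑ j ∈ Finset.range (s + 1),
            ((s.choose j : ℝ) * ((m : ℝ) * t) ^ (s - j)) • K (-(j : ℤ) * m)⁆ :=
  AL_gamma_symmetry_condition_general K σ hKσ
end

section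
/- Centerless Kac–Moody–Virasoro algebra of symmetries of the non-isospectral Ablowitz–Ladik hierarchy (Theorem 4.2): fix m ∈ ℤ and t ∈ ℝ, and for s ∈ ℕ set η(s) := Σ_{j=0}^{s} C(s,j)·(m·t)^{s−j} • σ(m − j·m) and γ(s) := Σ_{j=0}^{s} C(s,j)·(m·t)^{s−j} • K(−j·m), where C(s,j) is the binomial coefficient. Then for all s, l ∈ ℕ: ⁅η(s), η(l)⁆ = (l − s)·m • η(s + l − 1) whenever s + l ≥ 1; ⁅γ(s), γ(l)⁆ = 0; ⁅η(s), γ(l)⁆ = l·m • γ(s + l − 1) whenever l ≥ 1; and ⁅η(s), γ(0)⁆ = 0. -/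
/-!
Send `X ^ j` to `σ (m - j * m)`, resp. `K (-j * m)`, and extend linearly to `ℝ[X] → g`; then
`η s` and `γ s` are the images of `(X + C (m * t)) ^ s`. Under these maps the structure relations
become polynomial calculus: the bracket of two images of the first map is `m` times the image of
the Wronskian `p q' - p' q`, and the bracket of an image of the first with one of the second is
`m` times the image of `p q'`. For powers of one polynomial `Y` with `Y' = 1` these are
`(l - s) Y ^ (s + l - 1)` and `l Y ^ (s + l - 1)`.
-/

open Finset Polynomial

namespace Polynomial

section LinearCombination

variable {R M : Type*} [Semiring R] [AddCommMonoid M] [Module R M]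

noncomputable def linearCombination (v : ℕ → M) : R[X] →ₗ[R] M :=
  lsum fun n => LinearMap.toSpanSingleton R M (v n)

@[simp]
theorem linearCombination_monomial (v : ℕ → M) (n : ℕ) (a : R) :
    linearCombination v (monomial n a) = a • v n := by
  simp [linearCombination]

theorem linearCombination_eq_sum_range (v : ℕ → M) {p : R[X]} {N : ℕ} (hN : p.natDegree < N) :
    linearCombination v p = ∑ j ∈ range N, p.coeff j • v j := by
  simp only [linearCombination, lsum_apply]
  exact sum_over_range' p (fun n => by simp) N hN

theorem linearCombination_X_add_C_pow (v : ℕ → M) (r : R) (n : ℕ) :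
    linearCombination v ((X + C r) ^ n) =
      ∑ j ∈ range (n + 1), ((n.choose j : R) * r ^ (n - j)) • v j := by
  have hdeg : ((X + C r) ^ n).natDegree < n + 1 := by
    refine Nat.lt_succ_of_le ((natDegree_pow_le_of_le n ?_).trans (mul_one n).le)
    exact natDegree_add_le_of_degree_le natDegree_X_le (by simp)
  rw [linearCombination_eq_sum_range v hdeg]
  simp only [coeff_X_add_C_pow, Nat.cast_comm]

end LinearCombination

theorem monomial_mul_derivative_monomial {R : Type*} [Semiring R] (j k : ℕ) (a b : R) :
    monomial j a * derivative (monomial k b) = monomial (j + k - 1) (a * b * k) := by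
  cases k with
  | zero => simp
  | succ k => simp [monomial_mul_monomial, mul_assoc]

theorem wronskian_monomial {R : Type*} [CommRing R] (j k : ℕ) (a b : R) :
    wronskian (monomial j a) (monomial k b) = monomial (j + k - 1) (a * b * ((k : R) - j)) := by
  rw [wronskian, monomial_mul_derivative_monomial, mul_comm (derivative _),
    monomial_mul_derivative_monomial, add_comm k, ← map_sub]
  ring_nf

theorem wronskian_pow_pow {R : Type*} [CommRing R] (Y : R[X]) (s l : ℕ) :
    wronskian (Y ^ s) (Y ^ l) = C ((l : R) - s) * Y ^ (s + l - 1) * derivative Y := by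
  rw [wronskian, derivative_pow, derivative_pow]
  cases s with
  | zero => simp
  | succ s =>
    cases l with
    | zero =>
      rw [Nat.cast_zero, map_zero, pow_zero, Nat.add_zero, Nat.add_sub_cancel, zero_sub, map_neg]
      ring
    | succ l =>
      rw [show s + 1 + (l + 1) - 1 = s + l + 1 by omega, map_sub]
      push_cast
      ring

theorem mul_derivative_pow {R : Type*} [CommSemiring R] (Y : R[X]) (s l : ℕ) :
    Y ^ s * derivative (Y ^ l) = C (l : R) * Y ^ (s + l - 1) * derivative Y := by
  rw [derivative_pow]
  cases l with
  | zero => simp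
  | succ l =>
    rw [Nat.add_sub_cancel, show s + (l + 1) - 1 = s + l by omega, pow_add]
    ring

section Lie

variable {R L : Type*} [CommRing R] [LieRing L] [LieAlgebra R L]

theorem lie_linearCombination_eq_of_monomial {u w : ℕ → L} (B : R[X] →ₗ[R] R[X] →ₗ[R] L)
    (h : ∀ j k, ⁅u j, w k⁆ = B (monomial j 1) (monomial k 1)) (p q : R[X]) :
    ⁅linearCombination u p, linearCombination w q⁆ = B p q := by
  induction p using Polynomial.induction_on' with
  | add p₁ p₂ h₁ h₂ => rw [map_add, add_lie, h₁, h₂, LinearMap.map_add₂]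
  | monomial j a =>
    induction q using Polynomial.induction_on' with
    | add q₁ q₂ h₁ h₂ => rw [map_add, lie_add, h₁, h₂, map_add]
    | monomial k b =>
      have monomial_eq_smul (n : ℕ) (c : R) : monomial n c = c • monomial n 1 := by
        rw [smul_monomial, smul_eq_mul, mul_one]
      rw [linearCombination_monomial, linearCombination_monomial, smul_lie, lie_smul, h,
        monomial_eq_smul j a, monomial_eq_smul k b, LinearMap.map_smul₂, map_smul]

theorem lie_linearCombination_eq_zero {u w : ℕ → L} (h : ∀ j k, ⁅u j, w k⁆ = 0) (p q : R[X]) :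
    ⁅linearCombination u p, linearCombination w q⁆ = 0 :=
  lie_linearCombination_eq_of_monomial 0 h p q

theorem lie_linearCombination_eq_smul_wronskian {u : ℕ → L} {c : R}
    (h : ∀ j k, ⁅u j, u k⁆ = (((k : R) - j) * c) • u (j + k - 1)) (p q : R[X]) :
    ⁅linearCombination u p, linearCombination u q⁆ =
      c • linearCombination u (wronskian p q) :=
  lie_linearCombination_eq_of_monomial ((wronskianBilin R).compr₂ (c • linearCombination u))
    (fun j k => by
      rw [h, LinearMap.compr₂_apply, wronskianBilin_apply, wronskian_monomial,
        LinearMap.smul_apply, linearCombination_monomial, smul_smul, one_mul, one_mul, mul_comm])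
    p q

theorem lie_linearCombination_eq_smul_mul_derivative {u w : ℕ → L} {c : R}
    (h : ∀ j k, ⁅u j, w k⁆ = ((k : R) * c) • w (j + k - 1)) (p q : R[X]) :
    ⁅linearCombination u p, linearCombination w q⁆ =
      c • linearCombination w (p * derivative q) :=
  lie_linearCombination_eq_of_monomial
    (((LinearMap.mul R R[X]).compl₂ derivative).compr₂ (c • linearCombination w))
    (fun j k => by
      rw [h, LinearMap.compr₂_apply, LinearMap.compl₂_apply, LinearMap.mul_apply',
        monomial_mul_derivative_monomial, LinearMap.smul_apply, linearCombination_monomial,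
        smul_smul, one_mul, one_mul, mul_comm])
    p q

end Lie

end Polynomial

section Progression

variable {R L : Type*} [CommRing R] [LieRing L] [LieAlgebra R L]

theorem lie_sub_mul_sub_mul {σ : ℤ → L} (hσσ : ∀ a b : ℤ, ⁅σ a, σ b⁆ = (a - b) • σ (a + b))
    (m : ℤ) (j k : ℕ) :
    ⁅σ (m - j * m), σ (m - k * m)⁆ = (((k : R) - j) * m) • σ (m - (j + k - 1 : ℕ) * m) := by
  rcases Nat.eq_zero_or_pos (j + k) with hjk | hjk
  · -- the truncated index `0 + 0 - 1 = 0` is harmless: both sides vanish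
    obtain ⟨rfl, rfl⟩ : j = 0 ∧ k = 0 := by omega
    simp
  · rw [hσσ, ← Int.cast_smul_eq_zsmul R]
    congr 1
    · push_cast
      ring
    · push_cast [Nat.cast_sub hjk]
      congr 1
      ring

theorem lie_sub_mul_neg_mul {K σ : ℤ → L} (hKσ : ∀ a b : ℤ, ⁅K a, σ b⁆ = a • K (a + b))
    (m : ℤ) (j k : ℕ) :
    ⁅σ (m - j * m), K (-k * m)⁆ = ((k : R) * m) • K (-(j + k - 1 : ℕ) * m) := by
  rw [← lie_skew, hKσ]
  rcases Nat.eq_zero_or_pos (j + k) with hjk | hjk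
  · obtain ⟨rfl, rfl⟩ : j = 0 ∧ k = 0 := by omega
    simp
  · rw [← neg_smul, ← Int.cast_smul_eq_zsmul R]
    congr 1
    · push_cast
      ring
    · push_cast [Nat.cast_sub hjk]
      congr 1
      ring

end Progression

/-- Centerless Kac–Moody–Virasoro algebra of the η- and γ-symmetries of the
non-isospectral Ablowitz–Ladik hierarchy (Theorem 4.2). -/
theorem AL_nonisospectral_symmetry_algebra {g : Type*} [LieRing g] [LieAlgebra ℝ g]
    (K σ : ℤ → g)
    (hKK : ∀ m s : ℤ, ⁅K m, K s⁆ = 0)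
    (hKσ : ∀ m s : ℤ, ⁅K m, σ s⁆ = m • K (m + s))
    (hσσ : ∀ m s : ℤ, ⁅σ m, σ s⁆ = (m - s) • σ (m + s))
    (m : ℤ) (t : ℝ) (η γ : ℕ → g)
    (hη : ∀ s : ℕ, η s = ∑ j ∈ Finset.range (s + 1),
        ((s.choose j : ℝ) * ((m : ℝ) * t) ^ (s - j)) • σ (m - (j : ℤ) * m))
    (hγ : ∀ s : ℕ, γ s = ∑ j ∈ Finset.range (s + 1),
        ((s.choose j : ℝ) * ((m : ℝ) * t) ^ (s - j)) • K (-(j : ℤ) * m)) :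
    ∀ s l : ℕ,
      (1 ≤ s + l → ⁅η s, η l⁆ = (((l : ℤ) - (s : ℤ)) * m) • η (s + l - 1)) ∧
      ⁅γ s, γ l⁆ = 0 ∧
      (1 ≤ l → ⁅η s, γ l⁆ = ((l : ℤ) * m) • γ (s + l - 1)) ∧
      ⁅η s, γ 0⁆ = 0 := by
  set Y : ℝ[X] := X + C ((m : ℝ) * t)
  have hηY (s : ℕ) : η s = linearCombination (fun j : ℕ => σ (m - j * m)) (Y ^ s) := by
    rw [hη, linearCombination_X_add_C_pow]
  have hγY (s : ℕ) : γ s = linearCombination (fun j : ℕ => K (-j * m)) (Y ^ s) := by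
    rw [hγ, linearCombination_X_add_C_pow]
  have hηη := lie_linearCombination_eq_smul_wronskian (lie_sub_mul_sub_mul (R := ℝ) hσσ m)
  have hηγ := lie_linearCombination_eq_smul_mul_derivative (lie_sub_mul_neg_mul (R := ℝ) hKσ m)
  intro s l
  refine ⟨fun _ => ?_, ?_, fun _ => ?_, ?_⟩
  · rw [hηY, hηY, hηY, hηη, wronskian_pow_pow, derivative_X_add_C, mul_one, ← smul_eq_C_mul,
      map_smul, smul_smul, ← Int.cast_smul_eq_zsmul ℝ]
    push_cast
    congr 1
    ring
  · rw [hγY, hγY]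
    exact lie_linearCombination_eq_zero (fun j k => hKK _ _) _ _
  · rw [hηY, hγY, hγY, hηγ, mul_derivative_pow, derivative_X_add_C, mul_one, ← smul_eq_C_mul,
      map_smul, smul_smul, ← Int.cast_smul_eq_zsmul ℝ]
    push_cast
    congr 1
    ring
  · rw [hηY, hγY, hηγ, pow_zero, derivative_one, mul_zero, map_zero, smul_zero]
end

section
/- Generation of the symmetry algebra of the non-isospectral hierarchy (equation (61)): fix m ∈ ℤ with m ≠ 0 and t ∈ ℝ, and for s ∈ ℕ set η(s) := Σ_{j=0}^{s} C(s,j)·(m·t)^{s−j} • σ(m − j·m) and γ(s) := Σ_{j=0}^{s} C(s,j)·(m·t)^{s−j} • K(−j·m), where C(s,j) is the binomial coefficient. Then every element η(s) and γ(s), s ∈ ℕ, belongs to the Lie subalgebra of g generated by the three elements η(0), η(3), γ(1). -/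
/-!
Send `X ^ j` to `σ (m - j * m)` and to `K (-j * m)` by two linear maps `ℝ[X] → g`. The commutation
relations say that on polynomials the brackets become `m • (p * q' - p' * q)` and `-m • p' * q`, so
only the derivative enters. Then `η s` and `γ s` are the images of `(X + m t) ^ s`, and since
`X + m t` has derivative `1` they satisfy the same relations as the monomials:
`⁅η a, η b⁆ = m (b - a) • η (a + b - 1)` and `⁅γ 1, η b⁆ = -m • γ b`. From `η 0` and `η 3` one
gets `η 2`, then `η 1`, and `⁅η 2, η n⁆ = m (n - 2) • η (n + 1)` climbs to all `η n`; finally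
`⁅γ 1, η s⁆` gives `γ s`.
-/

open Finset Polynomial

section

variable {R : Type*} [CommRing R]

noncomputable def derivPairing (a b : R) (p q : R[X]) : R[X] :=
  C a * derivative p * q + C b * p * derivative q

theorem derivPairing_add_left (a b : R) (p₁ p₂ q : R[X]) :
    derivPairing a b (p₁ + p₂) q = derivPairing a b p₁ q + derivPairing a b p₂ q := by
  simp only [derivPairing, derivative_add]; ring

theorem derivPairing_add_right (a b : R) (p q₁ q₂ : R[X]) :
    derivPairing a b p (q₁ + q₂) = derivPairing a b p q₁ + derivPairing a b p q₂ := by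
  simp only [derivPairing, derivative_add]; ring

theorem derivPairing_C_mul_C_mul (a b α β : R) (p q : R[X]) :
    derivPairing a b (C α * p) (C β * q) = C (α * β) * derivPairing a b p q := by
  simp only [derivPairing, derivative_C_mul, map_mul]; ring

theorem derivPairing_pow {r : R[X]} (hr : derivative r = 1) (a b : R) (j k : ℕ) :
    derivPairing a b (r ^ j) (r ^ k) = C (a * j + b * k) * r ^ (j + k - 1) := by
  rcases j with _ | j <;> rcases k with _ | k <;>
    simp [derivPairing, derivative_pow, hr] <;> ring

variable {g : Type*} [LieRing g] [LieAlgebra R g]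

noncomputable def seqMap (e : ℕ → g) : R[X] →ₗ[R] g :=
  lsum fun n => LinearMap.toSpanSingleton R g (e n)

theorem seqMap_C_mul_X_pow (e : ℕ → g) (α : R) (n : ℕ) :
    seqMap e (C α * X ^ n) = α • e n := by
  simp [seqMap, C_mul_X_pow_eq_monomial]

theorem seqMap_X_add_C_pow (e : ℕ → g) (c : R) (s : ℕ) :
    seqMap e ((X + C c) ^ s) = ∑ j ∈ range (s + 1), ((s.choose j : R) * c ^ (s - j)) • e j := by
  rw [add_pow, map_sum]
  refine sum_congr rfl fun j _ => ?_
  rw [← seqMap_C_mul_X_pow]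
  congr 1
  simp only [map_mul, map_pow, map_natCast]
  ring

theorem lie_seqMap {e f h : ℕ → g} {a b : R}
    (H : ∀ j k : ℕ, ⁅e j, f k⁆ = (a * j + b * k) • h (j + k - 1)) (p q : R[X]) :
    ⁅seqMap e p, seqMap f q⁆ = seqMap h (derivPairing a b p q) := by
  induction p using Polynomial.induction_on' with
  | add p₁ p₂ h₁ h₂ => rw [map_add, add_lie, h₁, h₂, derivPairing_add_left, map_add]
  | monomial j α =>
    induction q using Polynomial.induction_on' with
    | add q₁ q₂ h₁ h₂ => rw [map_add, lie_add, h₁, h₂, derivPairing_add_right, map_add]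
    | monomial k β =>
      rw [← C_mul_X_pow_eq_monomial, ← C_mul_X_pow_eq_monomial, seqMap_C_mul_X_pow,
        seqMap_C_mul_X_pow, derivPairing_C_mul_C_mul, derivPairing_pow derivative_X,
        ← mul_assoc, ← map_mul, seqMap_C_mul_X_pow, smul_lie, lie_smul, H, smul_smul, smul_smul]

theorem lie_seqMap_pow {e f h : ℕ → g} {a b : R}
    (H : ∀ j k : ℕ, ⁅e j, f k⁆ = (a * j + b * k) • h (j + k - 1))
    {r : R[X]} (hr : derivative r = 1) (j k : ℕ) :
    ⁅seqMap e (r ^ j), seqMap f (r ^ k)⁆ = (a * j + b * k) • seqMap h (r ^ (j + k - 1)) := by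
  rw [lie_seqMap H, derivPairing_pow hr, ← smul_eq_C_mul, map_smul]

theorem lie_σ_sub_mul {σ : ℤ → g} (hσσ : ∀ m s : ℤ, ⁅σ m, σ s⁆ = (m - s) • σ (m + s))
    (m : ℤ) (j k : ℕ) :
    ⁅σ (m - j * m), σ (m - k * m)⁆ =
      (-(m : R) * j + m * k) • σ (m - ((j + k - 1 : ℕ) : ℤ) * m) := by
  rcases Nat.eq_zero_or_pos (j + k) with hjk | hjk
  · obtain ⟨rfl, rfl⟩ : j = 0 ∧ k = 0 := by omega
    simp
  rw [hσσ, ← Int.cast_smul_eq_zsmul R, Nat.cast_sub hjk]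
  congr 2
  · push_cast; ring
  · push_cast; ring

theorem lie_K_neg_mul_σ_sub_mul {K σ : ℤ → g} (hKσ : ∀ m s : ℤ, ⁅K m, σ s⁆ = m • K (m + s))
    (m : ℤ) (j k : ℕ) :
    ⁅K (-j * m), σ (m - k * m)⁆ = (-(m : R) * j + 0 * k) • K (-((j + k - 1 : ℕ) : ℤ) * m) := by
  rcases Nat.eq_zero_or_pos j with hj | hj
  · simp [hj, hKσ]
  rw [hKσ, ← Int.cast_smul_eq_zsmul R, Nat.cast_sub (by omega)]
  congr 2
  · push_cast; ring
  · push_cast; ring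

end

section

variable {𝕜 : Type*} [Field 𝕜] {g : Type*} [LieRing g] [LieAlgebra 𝕜 g]

theorem LieSubalgebra.mem_of_lie_eq_smul (S : LieSubalgebra 𝕜 g) {x y z : g} {r : 𝕜}
    (hr : r ≠ 0) (hx : x ∈ S) (hy : y ∈ S) (h : ⁅x, y⁆ = r • z) : z ∈ S := by
  have hxy := S.lie_mem hx hy
  rw [h] at hxy
  exact (S.toSubmodule.smul_mem_iff hr).mp hxy

theorem LieSubalgebra.apply_mem_of_lie_eq_mul_sub_smul [CharZero 𝕜] (S : LieSubalgebra 𝕜 g)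
    {η : ℕ → g} {μ : 𝕜} (hμ : μ ≠ 0)
    (h : ∀ a b : ℕ, ⁅η a, η b⁆ = (μ * (b - a)) • η (a + b - 1))
    (h₀ : η 0 ∈ S) (h₃ : η 3 ∈ S) (s : ℕ) : η s ∈ S := by
  have step {a b : ℕ} (hab : a < b) (ha : η a ∈ S) (hb : η b ∈ S) : η (a + b - 1) ∈ S :=
    S.mem_of_lie_eq_smul (mul_ne_zero hμ (sub_ne_zero.mpr (by exact_mod_cast hab.ne'))) ha hb
      (h a b)
  have h₂ : η 2 ∈ S := step (by norm_num) h₀ h₃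
  have h₁ : η 1 ∈ S := step (by norm_num) h₀ h₂
  induction s using Nat.strong_induction_on with
  | _ s ih =>
    match s, ih with
    | 0, _ => exact h₀
    | 1, _ => exact h₁
    | 2, _ => exact h₂
    | 3, _ => exact h₃
    | n + 4, ih =>
      have h₄ := step (by omega : 2 < n + 3) h₂ (ih (n + 3) (by omega))
      rwa [show 2 + (n + 3) - 1 = n + 4 by omega] at h₄

end

theorem AL_nonisospectral_symmetry_generators_general {g : Type*} [LieRing g] [LieAlgebra ℝ g]
    (K σ : ℤ → g)
    (hKσ : ∀ m s : ℤ, ⁅K m, σ s⁆ = m • K (m + s))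
    (hσσ : ∀ m s : ℤ, ⁅σ m, σ s⁆ = (m - s) • σ (m + s))
    (m : ℤ) (hm : m ≠ 0) (t : ℝ) (η γ : ℕ → g)
    (hη : ∀ s : ℕ, η s = ∑ j ∈ Finset.range (s + 1),
        ((s.choose j : ℝ) * ((m : ℝ) * t) ^ (s - j)) • σ (m - (j : ℤ) * m))
    (hγ : ∀ s : ℕ, γ s = ∑ j ∈ Finset.range (s + 1),
        ((s.choose j : ℝ) * ((m : ℝ) * t) ^ (s - j)) • K (-(j : ℤ) * m)) :
    ∀ s : ℕ,
      η s ∈ LieSubalgebra.lieSpan ℝ g {η 0, η 3, γ 1} ∧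
      γ s ∈ LieSubalgebra.lieSpan ℝ g {η 0, η 3, γ 1} := by
  set S := LieSubalgebra.lieSpan ℝ g {η 0, η 3, γ 1}
  let e : ℕ → g := fun j ↦ σ (m - j * m)
  let f : ℕ → g := fun j ↦ K (-j * m)
  have hr := derivative_X_add_C ((m : ℝ) * t)
  have hηX (s : ℕ) : η s = seqMap e ((X + C ((m : ℝ) * t)) ^ s) := by
    rw [hη, seqMap_X_add_C_pow]
  have hγX (s : ℕ) : γ s = seqMap f ((X + C ((m : ℝ) * t)) ^ s) := by
    rw [hγ, seqMap_X_add_C_pow]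
  have hηη (a b : ℕ) : ⁅η a, η b⁆ = ((m : ℝ) * (b - a)) • η (a + b - 1) := by
    rw [hηX, hηX, hηX, lie_seqMap_pow (h := e) (lie_σ_sub_mul hσσ m) hr]
    congr 1; ring
  have hγη (b : ℕ) : ⁅γ 1, η b⁆ = (-(m : ℝ)) • γ b := by
    rw [hγX, hηX, hγX, lie_seqMap_pow (h := f) (lie_K_neg_mul_σ_sub_mul hKσ m) hr]
    simp
  have hmR : (m : ℝ) ≠ 0 := Int.cast_ne_zero.mpr hm
  intro s
  have hηs : η s ∈ S := S.apply_mem_of_lie_eq_mul_sub_smul hmR hηη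
    (LieSubalgebra.subset_lieSpan (by simp)) (LieSubalgebra.subset_lieSpan (by simp)) s
  exact ⟨hηs, S.mem_of_lie_eq_smul (neg_ne_zero.mpr hmR)
    (LieSubalgebra.subset_lieSpan (by simp)) hηs (hγη s)⟩

/-- Generation of the symmetry algebra of the non-isospectral hierarchy (equation (61)):
for `m ≠ 0`, every `η(s)` and `γ(s)` lies in the Lie subalgebra generated by `η(0)`,
`η(3)` and `γ(1)`. -/
theorem AL_nonisospectral_symmetry_generators {g : Type*} [LieRing g] [LieAlgebra ℝ g]
    (K σ : ℤ → g)
    (hKK : ∀ m s : ℤ, ⁅K m, K s⁆ = 0)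
    (hKσ : ∀ m s : ℤ, ⁅K m, σ s⁆ = m • K (m + s))
    (hσσ : ∀ m s : ℤ, ⁅σ m, σ s⁆ = (m - s) • σ (m + s))
    (m : ℤ) (hm : m ≠ 0) (t : ℝ) (η γ : ℕ → g)
    (hη : ∀ s : ℕ, η s = ∑ j ∈ Finset.range (s + 1),
        ((s.choose j : ℝ) * ((m : ℝ) * t) ^ (s - j)) • σ (m - (j : ℤ) * m))
    (hγ : ∀ s : ℕ, γ s = ∑ j ∈ Finset.range (s + 1),
        ((s.choose j : ℝ) * ((m : ℝ) * t) ^ (s - j)) • K (-(j : ℤ) * m)) :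
    ∀ s : ℕ,
      η s ∈ LieSubalgebra.lieSpan ℝ g {η 0, η 3, γ 1} ∧
      γ s ∈ LieSubalgebra.lieSpan ℝ g {η 0, η 3, γ 1} :=
  AL_nonisospectral_symmetry_generators_general K σ hKσ hσσ m hm t η γ hη hγ
end
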